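/- Two words w < w' in a shift space L are consecutive (i.e., no word of L lies strictly between them) if and only if there exists n > 0 and two finite words u, u' of length n, consecutive in the lexicographically ordered set of length-n factors of L, such that w is the greatest word of Cyl_L(u) and w' is the smallest word of Cyl_L(u'). -/

import Mathlib

open MeasureTheory Topology Filter Set

/-- The shift map on one-sided infinite words, erasing the first letter. -/
def shiftMap {A : Type*} (w : ℕ → A) : ℕ → A := fun n => w (n + 1)

/-- A shift space: a closed, shift-invariant subset of `A^ℕ`. -/
def IsShiftSpace {A : Type*} [TopologicalSpace A] (L : Set (ℕ → A)) : Prop :=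
  IsClosed L ∧ ∀ w ∈ L, shiftMap w ∈ L

/-- The finite word `v` occurs in `w` at position `j`. -/
def OccursAt {A : Type*} (w : ℕ → A) (j : ℕ) (v : List A) : Prop :=
  ∀ i : Fin v.length, w (j + i) = v.get i

/-- `v` is a factor (subblock) of the language of `L`. -/
def IsFactor {A : Type*} (L : Set (ℕ → A)) (v : List A) : Prop :=
  ∃ w ∈ L, ∃ j, OccursAt w j v

/-- The cylinder of `v` in `L`: words of `L` having `v` as a prefix. -/
def Cyl {A : Type*} (L : Set (ℕ → A)) (v : List A) : Set (ℕ → A) :=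
  {w ∈ L | OccursAt w 0 v}

/-- Strict lexicographic order on infinite words. -/
def LexLt {A : Type*} [LinearOrder A] (w w' : ℕ → A) : Prop :=
  ∃ n, (∀ i < n, w i = w' i) ∧ w n < w' n

/-- Lexicographic order (non-strict) on infinite words. -/
def LexLe {A : Type*} [LinearOrder A] (w w' : ℕ → A) : Prop := LexLt w w' ∨ w = w'

/-- The word interval `[w, w']` in `L` for the lexicographic order. -/
def wordInterval {A : Type*} [LinearOrder A] (L : Set (ℕ → A)) (w w' : ℕ → A) :
    Set (ℕ → A) := {z ∈ L | LexLe w z ∧ LexLe z w'}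

/-- The length-`n` prefix of an infinite word, as a list. -/
def prefixWord {A : Type*} (w : ℕ → A) (n : ℕ) : List A := List.ofFn (fun i : Fin n => w i)

/-- A factor is left special if it has at least two distinct left one-letter extensions. -/
def IsLeftSpecial {A : Type*} (L : Set (ℕ → A)) (v : List A) : Prop :=
  ∃ a b : A, a ≠ b ∧ IsFactor L (a :: v) ∧ IsFactor L (b :: v)

/-- A factor is right special if it has at least two distinct right one-letter extensions. -/
def IsRightSpecial {A : Type*} (L : Set (ℕ → A)) (v : List A) : Prop :=
  ∃ a b : A, a ≠ b ∧ IsFactor L (v ++ [a]) ∧ IsFactor L (v ++ [b])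

/-- The set of infinite left special words: all prefixes are left special factors. -/
def SPset {A : Type*} (L : Set (ℕ → A)) : Set (ℕ → A) :=
  {w | ∀ n : ℕ, IsLeftSpecial L (prefixWord w n)}

/-- The factor complexity `p_L(n)`: the number of distinct length-`n` factors of `L`. -/
noncomputable def complexity {A : Type*} (L : Set (ℕ → A)) (n : ℕ) : ℕ :=
  Nat.card {v : List A // v.length = n ∧ IsFactor L v}

/-- The number of left special factors of length `n`. -/
noncomputable def splCount {A : Type*} (L : Set (ℕ → A)) (n : ℕ) : ℕ :=
  Nat.card {v : List A // v.length = n ∧ IsFactor L v ∧ IsLeftSpecial L v}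

/-- A minimal shift: a nonempty shift space with no nonempty proper subshift. -/
def IsMinimalShift {A : Type*} [TopologicalSpace A] (L : Set (ℕ → A)) : Prop :=
  IsShiftSpace L ∧ L.Nonempty ∧
    ∀ L' ⊆ L, IsShiftSpace L' → L'.Nonempty → L' = L

/-- Aperiodicity: no periodic word in `L`. -/
def IsAperiodic {A : Type*} (L : Set (ℕ → A)) : Prop :=
  ∀ w ∈ L, ∀ k : ℕ, 0 < k → shiftMap^[k] w ≠ w

/-- The factor set of `L` is prolongable: every factor extends by a letter on both sides. -/
def Prolongable {A : Type*} (L : Set (ℕ → A)) : Prop :=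
  ∀ v : List A, IsFactor L v →
    (∃ a : A, IsFactor L (a :: v)) ∧ (∃ b : A, IsFactor L (v ++ [b]))

/-! Lexicographic comparison of infinite words is decided by long enough prefixes, and taking the
length-`n` prefix is monotone. If nothing of `L` lies strictly between `w < w'`, cut at `n` just past
their first difference: a factor strictly between the two prefixes is, by shift invariance, the
prefix of a word of `L` strictly between `w` and `w'`, and so is any word of the cylinder of `w`
above `w`. Conversely, the prefix of a word strictly between `w` and `w'` lies between `u` and `u'`,
and equality with either end contradicts the extremality of `w` or `w'` in its cylinder. -/

section LexOrder

variable {A : Type*} [LinearOrder A]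

theorem lexLt_iff_toLex_lt {w z : ℕ → A} : LexLt w z ↔ toLex w < toLex z := Iff.rfl

theorem lexLe_iff_toLex_le {w z : ℕ → A} : LexLe w z ↔ toLex w ≤ toLex z := by
  rw [le_iff_lt_or_eq, toLex_inj]
  rfl

theorem prefixWord_lt_prefixWord_iff {w z : ℕ → A} {n : ℕ} :
    prefixWord w n < prefixWord z n ↔ ∃ m < n, (∀ i < m, w i = z i) ∧ w m < z m := by
  simp only [prefixWord, List.lt_iff_exists, List.length_ofFn, lt_irrefl, and_false, false_or,
    List.getElem_ofFn]
  grind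

theorem lexLt_iff_exists_prefixWord_lt {w z : ℕ → A} :
    LexLt w z ↔ ∃ n, prefixWord w n < prefixWord z n := by
  simp only [prefixWord_lt_prefixWord_iff]
  exact ⟨fun ⟨m, hm⟩ => ⟨m + 1, m, m.lt_succ_self, hm⟩, fun ⟨_, m, _, hm⟩ => ⟨m, hm⟩⟩

theorem lexLt_of_prefixWord_lt {w z : ℕ → A} {n : ℕ} (h : prefixWord w n < prefixWord z n) :
    LexLt w z :=
  lexLt_iff_exists_prefixWord_lt.2 ⟨n, h⟩

theorem lexLe_iff_not_lexLt {w z : ℕ → A} : LexLe w z ↔ ¬ LexLt z w := by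
  rw [lexLe_iff_toLex_le, lexLt_iff_toLex_lt]
  exact not_lt.symm

theorem LexLt.prefixWord_le {w z : ℕ → A} (h : LexLt w z) (n : ℕ) :
    prefixWord w n ≤ prefixWord z n :=
  le_of_not_gt fun h' => (lexLt_iff_toLex_lt.1 h).not_gt (lexLt_of_prefixWord_lt h')

theorem pos_of_prefixWord_lt {w z : ℕ → A} {n : ℕ} (h : prefixWord w n < prefixWord z n) :
    0 < n := by
  obtain ⟨m, hm, -⟩ := prefixWord_lt_prefixWord_iff.1 h
  exact m.zero_le.trans_lt hm

end LexOrder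

section Cylinders

variable {A : Type*}

theorem prefixWord_length (w : ℕ → A) (n : ℕ) : (prefixWord w n).length = n :=
  List.length_ofFn

theorem occursAt_zero_iff {w : ℕ → A} {v : List A} :
    OccursAt w 0 v ↔ prefixWord w v.length = v := by
  rw [List.ext_get_iff]
  simp [OccursAt, prefixWord, Fin.forall_iff]

theorem iterate_shiftMap_apply (w : ℕ → A) (j n : ℕ) : shiftMap^[j] w n = w (j + n) := by
  induction j generalizing w with
  | zero => simp
  | succ j ih => rw [Function.iterate_succ_apply, ih, shiftMap, Nat.add_right_comm]

theorem mem_cyl_iff {L : Set (ℕ → A)} {w : ℕ → A} {v : List A} :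
    w ∈ Cyl L v ↔ w ∈ L ∧ prefixWord w v.length = v := by
  rw [Cyl, Set.mem_ofPred_eq, occursAt_zero_iff]

theorem mem_cyl_prefixWord {L : Set (ℕ → A)} {w : ℕ → A} (hw : w ∈ L) (n : ℕ) :
    w ∈ Cyl L (prefixWord w n) :=
  mem_cyl_iff.2 ⟨hw, by rw [prefixWord_length]⟩

theorem isFactor_prefixWord {L : Set (ℕ → A)} {w : ℕ → A} (hw : w ∈ L) (n : ℕ) :
    IsFactor L (prefixWord w n) :=
  ⟨w, hw, 0, (mem_cyl_prefixWord hw n).2⟩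

theorem IsFactor.exists_prefixWord_eq {L : Set (ℕ → A)} (hL : Set.MapsTo shiftMap L L)
    {v : List A} (hv : IsFactor L v) : ∃ y ∈ L, prefixWord y v.length = v := by
  obtain ⟨w, hw, j, hocc⟩ := hv
  refine ⟨shiftMap^[j] w, hL.iterate j hw, occursAt_zero_iff.1 fun i => ?_⟩
  rw [iterate_shiftMap_apply, Nat.zero_add, hocc i]

end Cylinders

theorem consecutive_words_iff_consecutive_cylinders_general
    {A : Type*} [TopologicalSpace A] [LinearOrder A]
    (L : Set (ℕ → A)) (hL : IsShiftSpace L)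
    (w w' : ℕ → A) (hw : w ∈ L) (hw' : w' ∈ L) (hlt : LexLt w w') :
    (¬ ∃ z ∈ L, LexLt w z ∧ LexLt z w') ↔
      ∃ n > 0, ∃ u u' : List A,
        u.length = n ∧ u'.length = n ∧ IsFactor L u ∧ IsFactor L u' ∧
        List.Lex (· < ·) u u' ∧
        (¬ ∃ v : List A, v.length = n ∧ IsFactor L v ∧
            List.Lex (· < ·) u v ∧ List.Lex (· < ·) v u') ∧
        (w ∈ Cyl L u ∧ ∀ z ∈ Cyl L u, LexLe z w) ∧
        (w' ∈ Cyl L u' ∧ ∀ z ∈ Cyl L u', LexLe w' z) := by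
  constructor
  · intro hno
    obtain ⟨n, hn⟩ := lexLt_iff_exists_prefixWord_lt.1 hlt
    refine ⟨n, pos_of_prefixWord_lt hn, prefixWord w n, prefixWord w' n, prefixWord_length w n,
      prefixWord_length w' n, isFactor_prefixWord hw n, isFactor_prefixWord hw' n, hn, ?_,
      ⟨mem_cyl_prefixWord hw n, ?_⟩, ⟨mem_cyl_prefixWord hw' n, ?_⟩⟩
    · rintro ⟨v, hv, hvL, hwv, hvw'⟩
      obtain ⟨y, hy, rfl⟩ : ∃ y ∈ L, prefixWord y n = v := hv ▸ hvL.exists_prefixWord_eq hL.2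
      exact hno ⟨y, hy, lexLt_of_prefixWord_lt hwv, lexLt_of_prefixWord_lt hvw'⟩
    · rintro z ⟨hz, hzw⟩
      rw [occursAt_zero_iff, prefixWord_length] at hzw
      exact lexLe_iff_not_lexLt.2 fun hwz => hno ⟨z, hz, hwz, lexLt_of_prefixWord_lt (hzw ▸ hn)⟩
    · rintro z ⟨hz, hzw'⟩
      rw [occursAt_zero_iff, prefixWord_length] at hzw'
      exact lexLe_iff_not_lexLt.2 fun hzw => hno ⟨z, hz, lexLt_of_prefixWord_lt (hzw' ▸ hn), hzw⟩
  · rintro ⟨n, -, u, u', hu, hu', -, -, -, hbetween, ⟨hwu, hwmax⟩, ⟨hw'u', hw'min⟩⟩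
      ⟨z, hz, hwz, hzw'⟩
    obtain rfl : prefixWord w n = u := hu ▸ (mem_cyl_iff.1 hwu).2
    obtain rfl : prefixWord w' n = u' := hu' ▸ (mem_cyl_iff.1 hw'u').2
    rcases (hwz.prefixWord_le n).lt_or_eq with hwz_pre | hwz_pre
    · rcases (hzw'.prefixWord_le n).lt_or_eq with hzw'_pre | hzw'_pre
      · exact hbetween ⟨_, prefixWord_length z n, isFactor_prefixWord hz n, hwz_pre, hzw'_pre⟩
      · exact lexLe_iff_not_lexLt.1 (hw'min z (hzw'_pre ▸ mem_cyl_prefixWord hz n)) hzw'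
    · exact lexLe_iff_not_lexLt.1 (hwmax z (hwz_pre ▸ mem_cyl_prefixWord hz n)) hwz

/-- Two words `w < w'` of a shift space `L` are consecutive iff for some
`n > 0` they are respectively the greatest and smallest words of two consecutive
cylinders of length-`n` factors. -/
theorem consecutive_words_iff_consecutive_cylinders
    {A : Type*} [Fintype A] [TopologicalSpace A] [DiscreteTopology A] [LinearOrder A]
    (L : Set (ℕ → A)) (hL : IsShiftSpace L)
    (w w' : ℕ → A) (hw : w ∈ L) (hw' : w' ∈ L) (hlt : LexLt w w') :
    (¬ ∃ z ∈ L, LexLt w z ∧ LexLt z w') ↔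
      ∃ n > 0, ∃ u u' : List A,
        u.length = n ∧ u'.length = n ∧ IsFactor L u ∧ IsFactor L u' ∧
        List.Lex (· < ·) u u' ∧
        (¬ ∃ v : List A, v.length = n ∧ IsFactor L v ∧
            List.Lex (· < ·) u v ∧ List.Lex (· < ·) v u') ∧
        (w ∈ Cyl L u ∧ ∀ z ∈ Cyl L u, LexLe z w) ∧
        (w' ∈ Cyl L u' ∧ ∀ z ∈ Cyl L u', LexLe w' z) :=
  consecutive_words_iff_consecutive_cylinders_general L hL w w' hw hw' hlt
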